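/- arXiv:2311.00582 — 2 statements merged into one kernel-verified Lean document; each statement's English description precedes it below -/
import Mathlib

section
/- Let (p,q) be a Nash equilibrium of a zero-sum matrix game R with value v, satisfying the SIISOW condition: e_iᵀRq = v for all i ∈ I := supp(p), pᵀRe_j = v for all j ∈ J := supp(q), e_iᵀRq < v for all i ∉ I, and pᵀRe_j > v for all j ∉ J. If additionally the (|I|+1)×(|J|+1) block matrix [[R_{IJ}, -1]; [1ᵀ, 0]] is invertible, then (p,q) is the unique Nash equilibrium of R. -/
/-!
The SIISOW conditions say that every pure row earns at most `v` against `q` and every pure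
column concedes at least `v` to `p`, so `(p, q)` is an equilibrium of value `v`. Any other
equilibrium `(p', q')` has the same value, hence `p` is a best response to `q'`: every row in
`I` earns exactly `v` against `q'`. Strictness off the supports forces `supp q' ⊆ J`, so
`(q'_J, 0)` and `(q_J, 0)` have the same image `(R_IJ w_J, 1ᵀ w_J)` under the block matrix,
and injectivity gives `q' = q`. Exchanging the roles of the players, i.e. passing to the game
`-Rᵀ` whose block matrix is minus the transpose, turns surjectivity into `p' = p`.
-/

open Finset

/-- A mixed strategy: nonnegative entries summing to 1. -/
def isSimplex {n : ℕ} (p : Fin n → ℝ) : Prop := (∀ i, 0 ≤ p i) ∧ ∑ i, p i = 1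

/-- Expected payoff `pᵀ R q` to player 1. -/
noncomputable def pay {m n : ℕ} (R : Matrix (Fin m) (Fin n) ℝ) (p : Fin m → ℝ)
    (q : Fin n → ℝ) : ℝ :=
  ∑ i, ∑ j, p i * R i j * q j

/-- Payoff of pure row `i` against mixed column strategy `q`:  `e_iᵀ R q`. -/
noncomputable def rowPay {m n : ℕ} (R : Matrix (Fin m) (Fin n) ℝ) (i : Fin m)
    (q : Fin n → ℝ) : ℝ :=
  ∑ j, R i j * q j

/-- Payoff of mixed row strategy `p` against pure column `j`:  `pᵀ R e_j`. -/
noncomputable def colPay {m n : ℕ} (R : Matrix (Fin m) (Fin n) ℝ) (p : Fin m → ℝ)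
    (j : Fin n) : ℝ :=
  ∑ i, p i * R i j

/-- Nash equilibrium of the zero-sum matrix game `R`. -/
def isNash {m n : ℕ} (R : Matrix (Fin m) (Fin n) ℝ) (p : Fin m → ℝ)
    (q : Fin n → ℝ) : Prop :=
  isSimplex p ∧ isSimplex q ∧
    (∀ p', isSimplex p' → pay R p' q ≤ pay R p q) ∧
    (∀ q', isSimplex q' → pay R p q ≤ pay R p q')

/-- The block matrix `[[R_IJ, -1]; [1ᵀ, 0]]` on the supports of `p` and `q`. -/
noncomputable def blockMat {m n : ℕ} (R : Matrix (Fin m) (Fin n) ℝ) (p : Fin m → ℝ)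
    (q : Fin n → ℝ) :
    Matrix ({i : Fin m // 0 < p i} ⊕ Unit) ({j : Fin n // 0 < q j} ⊕ Unit) ℝ :=
  Matrix.of fun a b =>
    match a, b with
    | Sum.inl i, Sum.inl j => R i.1 j.1
    | Sum.inl _, Sum.inr _ => -1
    | Sum.inr _, Sum.inl _ => 1
    | Sum.inr _, Sum.inr _ => 0

open Matrix

theorem Fintype.sum_subtype_eq_sum_of_eq_zero {ι M : Type*} [Fintype ι] [AddCommMonoid M]
    (P : ι → Prop) [DecidablePred P] (f : ι → M) (hf : ∀ i, ¬ P i → f i = 0) :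
    ∑ i : {i // P i}, f i = ∑ i, f i := by
  rw [← Fintype.sum_subtype_add_sum_subtype P f,
    Fintype.sum_eq_zero (fun i : {i // ¬ P i} => f i) fun i => hf i.1 i.2, add_zero]

theorem Matrix.vecMul_injective_of_surjective_mulVec {α m n : Type*} [CommRing α]
    [Fintype m] [Fintype n] {B : Matrix m n α} (hB : Function.Surjective B.mulVec) :
    Function.Injective (· ᵥ* B) := by
  classical
  intro x y hxy
  have horth : ∀ w, (x - y) ⬝ᵥ w = 0 := by
    intro w
    obtain ⟨u, rfl⟩ := hB w
    rw [dotProduct_mulVec, sub_vecMul, sub_eq_zero.2 hxy, zero_dotProduct]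
  funext i
  simpa [dotProduct_single, sub_eq_zero] using horth (Pi.single i 1)

theorem isSimplex_single {k : ℕ} (i : Fin k) : isSimplex (Pi.single i (1 : ℝ)) :=
  ⟨fun j => by by_cases h : j = i <;> simp [h], by simp⟩

namespace isSimplex

variable {k : ℕ} {w f : Fin k → ℝ} {c : ℝ}

theorem sum_mul_le (hw : isSimplex w) (hf : ∀ i, f i ≤ c) : ∑ i, w i * f i ≤ c :=
  calc ∑ i, w i * f i ≤ ∑ i, w i * c :=
        Finset.sum_le_sum fun i _ => mul_le_mul_of_nonneg_left (hf i) (hw.1 i)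
    _ = c := by rw [← Finset.sum_mul, hw.2, one_mul]

theorem le_sum_mul (hw : isSimplex w) (hf : ∀ i, c ≤ f i) : c ≤ ∑ i, w i * f i := by
  simpa [Finset.sum_neg_distrib] using hw.sum_mul_le (f := -f) (c := -c) (by simpa using hf)

theorem eq_of_sum_mul_eq_of_le (hw : isSimplex w) (hf : ∀ i, f i ≤ c)
    (h : ∑ i, w i * f i = c) {i : Fin k} (hi : 0 < w i) : f i = c := by
  have hsum : ∑ i, w i * f i = ∑ i, w i * c := by rw [h, ← Finset.sum_mul, hw.2, one_mul]
  have hterm := (Finset.sum_eq_sum_iff_of_le fun i _ =>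
    mul_le_mul_of_nonneg_left (hf i) (hw.1 i)).1 hsum i (Finset.mem_univ i)
  exact mul_left_cancel₀ hi.ne' hterm

theorem eq_of_sum_mul_eq_of_ge (hw : isSimplex w) (hf : ∀ i, c ≤ f i)
    (h : ∑ i, w i * f i = c) {i : Fin k} (hi : 0 < w i) : f i = c :=
  neg_injective <| hw.eq_of_sum_mul_eq_of_le (f := -f) (by simpa using hf)
    (by simpa [Finset.sum_neg_distrib] using h) hi

end isSimplex

section Game

variable {m n : ℕ} {R : Matrix (Fin m) (Fin n) ℝ} {p p' : Fin m → ℝ} {q q' : Fin n → ℝ}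

theorem pay_eq_sum_rowPay (R : Matrix (Fin m) (Fin n) ℝ) (p : Fin m → ℝ) (q : Fin n → ℝ) :
    pay R p q = ∑ i, p i * rowPay R i q := by
  simp [pay, rowPay, Finset.mul_sum, mul_assoc]

theorem pay_eq_sum_colPay (R : Matrix (Fin m) (Fin n) ℝ) (p : Fin m → ℝ) (q : Fin n → ℝ) :
    pay R p q = ∑ j, q j * colPay R p j := by
  rw [pay, Finset.sum_comm]
  simp [colPay, Finset.mul_sum, mul_comm]

theorem isNash.rowPay_le (h : isNash R p q) (i : Fin m) : rowPay R i q ≤ pay R p q := by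
  simpa [pay_eq_sum_rowPay, Pi.single_apply] using h.2.2.1 _ (isSimplex_single i)

theorem isNash.le_colPay (h : isNash R p q) (j : Fin n) : pay R p q ≤ colPay R p j := by
  simpa [pay_eq_sum_colPay, Pi.single_apply] using h.2.2.2 _ (isSimplex_single j)

theorem pay_eq_of_rowPay_le_of_le_colPay {v : ℝ} (hp : isSimplex p) (hq : isSimplex q)
    (hrow : ∀ i, rowPay R i q ≤ v) (hcol : ∀ j, v ≤ colPay R p j) : pay R p q = v :=
  le_antisymm (pay_eq_sum_rowPay R p q ▸ hp.sum_mul_le hrow)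
    (pay_eq_sum_colPay R p q ▸ hq.le_sum_mul hcol)

theorem isNash_of_rowPay_le_of_le_colPay {v : ℝ} (hp : isSimplex p) (hq : isSimplex q)
    (hrow : ∀ i, rowPay R i q ≤ v) (hcol : ∀ j, v ≤ colPay R p j) : isNash R p q := by
  have hv := pay_eq_of_rowPay_le_of_le_colPay hp hq hrow hcol
  refine ⟨hp, hq, fun p' hp' => ?_, fun q' hq' => ?_⟩
  · rw [hv, pay_eq_sum_rowPay]
    exact hp'.sum_mul_le hrow
  · rw [hv, pay_eq_sum_colPay]
    exact hq'.le_sum_mul hcol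

theorem isNash.pay_eq_of_isNash (h : isNash R p q) (h' : isNash R p' q') :
    pay R p q' = pay R p q ∧ pay R p' q' = pay R p q := by
  have := h.2.2.1 p' h'.1
  have := h.2.2.2 q' h'.2.1
  have := h'.2.2.1 p h.1
  have := h'.2.2.2 q h.2.1
  constructor <;> linarith

theorem pay_neg_transpose (R : Matrix (Fin m) (Fin n) ℝ) (p : Fin m → ℝ) (q : Fin n → ℝ) :
    pay (-Rᵀ) q p = -pay R p q := by
  rw [pay, pay, Finset.sum_comm, ← Finset.sum_neg_distrib]
  simp [Finset.sum_neg_distrib, mul_comm, mul_left_comm]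

theorem colPay_neg_transpose (R : Matrix (Fin m) (Fin n) ℝ) (q : Fin n → ℝ) (i : Fin m) :
    colPay (-Rᵀ) q i = -rowPay R i q := by
  simp [colPay, rowPay, mul_comm]

theorem isNash.neg_transpose (h : isNash R p q) : isNash (-Rᵀ) q p := by
  refine ⟨h.2.1, h.1, fun q' hq' => ?_, fun p' hp' => ?_⟩
  · simpa [pay_neg_transpose] using h.2.2.2 q' hq'
  · simpa [pay_neg_transpose] using h.2.2.1 p' hp'

theorem blockMat_mulVec {w : Fin n → ℝ} (hw : ∀ j, ¬ 0 < q j → w j = 0) :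
    blockMat R p q *ᵥ Sum.elim (fun j => w j.1) 0 =
      Sum.elim (fun i => rowPay R i.1 w) (fun _ => ∑ j, w j) := by
  ext (i | _)
  · simp only [mulVec, dotProduct, blockMat, of_apply, Fintype.sum_sum_type, Sum.elim_inl,
      univ_unique, Sum.elim_inr, Pi.zero_apply, mul_zero, sum_const_zero, add_zero, rowPay]
    exact Fintype.sum_subtype_eq_sum_of_eq_zero _ (fun j => R i j * w j) fun j hj => by
      rw [hw j hj, mul_zero]
  · simp only [mulVec, dotProduct, blockMat, of_apply, Fintype.sum_sum_type, Sum.elim_inl, one_mul,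
      univ_unique, Sum.elim_inr, Pi.zero_apply, mul_zero, sum_const_zero, add_zero]
    exact Fintype.sum_subtype_eq_sum_of_eq_zero _ w hw

theorem eq_of_injective_blockMat_mulVec (hinj : Function.Injective (blockMat R p q).mulVec)
    {w w' : Fin n → ℝ} (hw : ∀ j, ¬ 0 < q j → w j = 0) (hw' : ∀ j, ¬ 0 < q j → w' j = 0)
    (hrow : ∀ i, 0 < p i → rowPay R i w = rowPay R i w') (hsum : ∑ j, w j = ∑ j, w' j) :
    w = w' := by
  have hext : Sum.elim (fun j : {j // 0 < q j} => w j) (0 : Unit → ℝ) =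
      Sum.elim (fun j : {j // 0 < q j} => w' j) 0 := by
    refine hinj ?_
    rw [blockMat_mulVec hw, blockMat_mulVec hw']
    congr 1
    · funext i
      exact hrow i.1 i.2
    · funext
      exact hsum
  funext j
  by_cases hj : 0 < q j
  · exact congrFun hext (Sum.inl ⟨j, hj⟩)
  · rw [hw j hj, hw' j hj]

theorem isNash.eq_right_of_injective_blockMat (hN : isNash R p q)
    (hcolOut : ∀ j, q j = 0 → pay R p q < colPay R p j)
    (hinj : Function.Injective (blockMat R p q).mulVec) (hN' : isNash R p' q') : q' = q := by
  obtain ⟨hpq', hp'q'⟩ := hN.pay_eq_of_isNash hN'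
  have hq'_supp : ∀ j, ¬ 0 < q j → q' j = 0 := by
    intro j hj
    refine le_antisymm (not_lt.1 fun hq'j => ?_) (hN'.2.1.1 j)
    have hcol_eq := hN'.2.1.eq_of_sum_mul_eq_of_ge hN.le_colPay
      ((pay_eq_sum_colPay R p q').symm.trans hpq') hq'j
    exact (hcolOut j (le_antisymm (not_lt.1 hj) (hN.2.1.1 j))).ne' hcol_eq
  have hrow : ∀ i, 0 < p i → rowPay R i q' = rowPay R i q := by
    intro i hi
    rw [hN.1.eq_of_sum_mul_eq_of_le (fun i => (hN'.rowPay_le i).trans_eq hp'q')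
        ((pay_eq_sum_rowPay R p q').symm.trans hpq') hi,
      hN.1.eq_of_sum_mul_eq_of_le hN.rowPay_le (pay_eq_sum_rowPay R p q).symm hi]
  exact eq_of_injective_blockMat_mulVec hinj hq'_supp
    (fun j hj => le_antisymm (not_lt.1 hj) (hN.2.1.1 j)) hrow (hN'.2.1.2.trans hN.2.1.2.symm)

theorem blockMat_neg_transpose : blockMat (-Rᵀ) q p = -(blockMat R p q)ᵀ := by
  ext (j | _) (i | _) <;> simp [blockMat]

theorem injective_blockMat_neg_transpose_mulVec
    (h : Function.Surjective (blockMat R p q).mulVec) :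
    Function.Injective (blockMat (-Rᵀ) q p).mulVec := by
  intro x y hxy
  refine vecMul_injective_of_surjective_mulVec h ?_
  simpa [blockMat_neg_transpose, neg_mulVec, mulVec_transpose] using hxy

end Game

theorem stmt2_general {m n : ℕ} (R : Matrix (Fin m) (Fin n) ℝ)
    (p : Fin m → ℝ) (q : Fin n → ℝ) (v : ℝ)
    (hp : isSimplex p) (hq : isSimplex q)
    (hrowIn : ∀ i, 0 < p i → rowPay R i q = v)
    (hcolIn : ∀ j, 0 < q j → colPay R p j = v)
    (hrowOut : ∀ i, p i = 0 → rowPay R i q < v)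
    (hcolOut : ∀ j, q j = 0 → v < colPay R p j)
    (hINV : Function.Bijective (Matrix.mulVecLin (blockMat R p q))) :
    isNash R p q ∧ ∀ p' q', isNash R p' q' → p' = p ∧ q' = q := by
  rw [coe_mulVecLin] at hINV
  have hrow : ∀ i, rowPay R i q ≤ v := fun i =>
    (hp.1 i).eq_or_lt.elim (fun h => (hrowOut i h.symm).le) (fun h => (hrowIn i h).le)
  have hcol : ∀ j, v ≤ colPay R p j := fun j =>
    (hq.1 j).eq_or_lt.elim (fun h => (hcolOut j h.symm).le) (fun h => (hcolIn j h).ge)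
  have hpay := pay_eq_of_rowPay_le_of_le_colPay hp hq hrow hcol
  have hN := isNash_of_rowPay_le_of_le_colPay hp hq hrow hcol
  refine ⟨hN, fun p' q' hN' => ⟨?_, ?_⟩⟩
  · refine hN.neg_transpose.eq_right_of_injective_blockMat (fun i hi => ?_)
      (injective_blockMat_neg_transpose_mulVec hINV.2) hN'.neg_transpose
    rw [pay_neg_transpose, colPay_neg_transpose, hpay, neg_lt_neg_iff]
    exact hrowOut i hi
  · exact hN.eq_right_of_injective_blockMat (fun j hj => hpay ▸ hcolOut j hj) hINV.1 hN'

/-- SIISOW together with invertibility of the block matrix implies that `(p,q)` is the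
unique Nash equilibrium of `R`. -/
theorem stmt2 {m n : ℕ} (R : Matrix (Fin m) (Fin n) ℝ)
    (p : Fin m → ℝ) (q : Fin n → ℝ) (v : ℝ)
    (hp : isSimplex p) (hq : isSimplex q)
    (hv : v = pay R p q)
    (hrowIn : ∀ i, 0 < p i → rowPay R i q = v)
    (hcolIn : ∀ j, 0 < q j → colPay R p j = v)
    (hrowOut : ∀ i, p i = 0 → rowPay R i q < v)
    (hcolOut : ∀ j, q j = 0 → v < colPay R p j)
    (hINV : Function.Bijective (Matrix.mulVecLin (blockMat R p q))) :
    isNash R p q ∧ ∀ p' q', isNash R p' q' → p' = p ∧ q' = q :=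
  stmt2_general R p q v hp hq hrowIn hcolIn hrowOut hcolOut hINV
end

section
/- With R^{eRPS} as defined (for equal supports I = J = {0,...,k−1}, k ≥ 2), pᵀ R^{eRPS} e_j = 0 for all j ∈ J and pᵀ R^{eRPS} e_j = 1 for all j ∉ J; consequently pᵀ R^{eRPS} q = 0. -/
/-!
In an in-support column `j`, the only rows with nonzero weight `p i * R i j` are those with
`(i + 1) % k = j`, contributing `-c / q j`, and those with `(i + 2) % k = j`, contributing
`c / q j`. As `i ↦ (i + d) % k` permutes `{0, …, k - 1}`, each kind occurs exactly once and they
cancel (when `m < k` the rows do not cover the support, but then `c = 0`). An out-of-support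
column sees the constant payoff `1` on the support of `p`, and `pᵀ R q = ∑ⱼ (pᵀ R eⱼ) q j`
vanishes because `q` lives on the support.
-/

open Finset

/-- Extension of `p : Fin m → ℝ` to `ℕ` by zero. -/
noncomputable def pext {m : ℕ} (p : Fin m → ℝ) (i : ℕ) : ℝ :=
  if h : i < m then p ⟨i, h⟩ else 0

/-- The normalizing constant `c` of the extended Rock-Paper-Scissors game. -/
noncomputable def eRPSc {m n : ℕ} (k : ℕ) (p : Fin m → ℝ) (q : Fin n → ℝ) : ℝ :=
  ⨅ i : Fin k, min (pext p i * pext q (((i : ℕ) + 1) % k))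
    (pext p i * pext q (((i : ℕ) + 2) % k))

/-- The extended Rock-Paper-Scissors payoff matrix for target `(p, q)` with common
support `{0, …, k-1}`. -/
noncomputable def eRPS {m n : ℕ} (k : ℕ) (p : Fin m → ℝ) (q : Fin n → ℝ) :
    Matrix (Fin m) (Fin n) ℝ :=
  Matrix.of fun i j =>
    if (i : ℕ) < k ∧ (j : ℕ) < k then
      if 1 < k ∧ (j : ℕ) = ((i : ℕ) + 1) % k then -(eRPSc k p q) / (p i * q j)
      else if 1 < k ∧ (j : ℕ) = ((i : ℕ) + 2) % k then eRPSc k p q / (p i * q j)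
      else 0
    else if (i : ℕ) < k then 1
    else if (j : ℕ) < k then -1
    else 0

theorem Finset.sum_range_comp_add_mod {M : Type*} [AddCommMonoid M] (f : ℕ → M) (k d : ℕ) :
    ∑ a ∈ range k, f ((a + d) % k) = ∑ a ∈ range k, f a := by
  rcases Nat.eq_zero_or_pos k with rfl | hk
  · simp
  have : NeZero k := ⟨hk.ne'⟩
  rw [← Fin.sum_univ_eq_sum_range (fun a => f ((a + d) % k)), ← Fin.sum_univ_eq_sum_range f]
  exact Fintype.sum_equiv (Equiv.addRight (Fin.ofNat k d)) _ _ fun i => by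
    simp [Fin.val_add, Nat.add_mod_mod]

section eRPS

variable {m n : ℕ} {k : ℕ} {p : Fin m → ℝ} {q : Fin n → ℝ}

theorem pext_nonneg (hp : ∀ i, 0 ≤ p i) (a : ℕ) : 0 ≤ pext p a := by
  unfold pext
  split_ifs
  exacts [hp _, le_rfl]

theorem eRPSc_nonneg (hp : ∀ i, 0 ≤ p i) (hq : ∀ j, 0 ≤ q j) : 0 ≤ eRPSc k p q :=
  Real.iInf_nonneg fun _ =>
    le_min (mul_nonneg (pext_nonneg hp _) (pext_nonneg hq _))
      (mul_nonneg (pext_nonneg hp _) (pext_nonneg hq _))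

theorem eRPSc_le {a : ℕ} (ha : a < k) : eRPSc k p q ≤ pext p a * pext q ((a + 1) % k) :=
  (ciInf_le (Set.finite_range _).bddBelow (⟨a, ha⟩ : Fin k)).trans (min_le_left _ _)

theorem eRPSc_eq_zero_of_lt (hp : ∀ i, 0 ≤ p i) (hq : ∀ j, 0 ≤ q j) (hmk : m < k) :
    eRPSc k p q = 0 := by
  refine le_antisymm ?_ (eRPSc_nonneg hp hq)
  simpa [pext] using eRPSc_le (p := p) (q := q) hmk

theorem mul_eRPS_apply_of_lt (hk : 1 < k) {i : Fin m} {j : Fin n} (hi : (i : ℕ) < k)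
    (hj : (j : ℕ) < k) (hpi : p i ≠ 0) :
    p i * eRPS k p q i j =
      (if ((i : ℕ) + 2) % k = j then eRPSc k p q / q j else 0) -
        (if ((i : ℕ) + 1) % k = j then eRPSc k p q / q j else 0) := by
  have hne : ((i : ℕ) + 1) % k ≠ ((i : ℕ) + 2) % k := fun h => by
    have h12 : 1 % k = 2 % k := Nat.ModEq.add_left_cancel' (i : ℕ) h
    rcases (show k = 2 ∨ 2 < k by omega) with rfl | h2k
    · simp at h12
    · rw [Nat.mod_eq_of_lt hk, Nat.mod_eq_of_lt h2k] at h12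
      omega
  have hcancel (x : ℝ) : p i * (x / (p i * q j)) = x / q j := by
    rw [← mul_div_assoc, mul_div_mul_left x (q j) hpi]
  simp only [eRPS, Matrix.of_apply, if_pos (And.intro hi hj), hk, true_and]
  by_cases h1 : ((i : ℕ) + 1) % k = j
  · rw [if_pos h1.symm, if_neg (fun h2 => hne (h1.trans h2.symm)), if_pos h1, hcancel]
    ring
  · by_cases h2 : ((i : ℕ) + 2) % k = j
    · rw [if_neg (Ne.symm h1), if_pos h2.symm, if_pos h2, if_neg h1, hcancel, sub_zero]
    · rw [if_neg (Ne.symm h1), if_neg (Ne.symm h2), if_neg h1, if_neg h2, mul_zero, sub_zero]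

theorem colPay_eRPS_of_lt (hk : 1 < k) (hp : ∀ i, 0 ≤ p i) (hq : ∀ j, 0 ≤ q j)
    (hpos : ∀ i : Fin m, (i : ℕ) < k → p i ≠ 0) (hzero : ∀ i : Fin m, k ≤ (i : ℕ) → p i = 0)
    {j : Fin n} (hj : (j : ℕ) < k) : colPay (eRPS k p q) p j = 0 := by
  set F : ℕ → ℝ := fun b => if b = j then eRPSc k p q / q j else 0
  set G : ℕ → ℝ := fun a => if a < k then F ((a + 2) % k) - F ((a + 1) % k) else 0
  have hterm (i : Fin m) : p i * eRPS k p q i j = G i := by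
    by_cases hi : (i : ℕ) < k
    · rw [mul_eRPS_apply_of_lt hk hi hj (hpos i hi)]
      simp only [G, F, if_pos hi]
    · rw [hzero i (not_lt.1 hi), zero_mul]
      simp only [G, if_neg hi]
  rw [colPay, Finset.sum_congr rfl fun i _ => hterm i, Fin.sum_univ_eq_sum_range G]
  rcases lt_or_ge m k with hmk | hkm
  · simp [G, F, eRPSc_eq_zero_of_lt hp hq hmk]
  rw [← Finset.sum_subset (range_subset_range.2 hkm) fun a _ hak => if_neg (by simpa using hak),
    Finset.sum_congr rfl fun a ha => if_pos (mem_range.1 ha), Finset.sum_sub_distrib,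
    Finset.sum_range_comp_add_mod, Finset.sum_range_comp_add_mod, sub_self]

theorem colPay_eRPS_of_le (hzero : ∀ i : Fin m, k ≤ (i : ℕ) → p i = 0) {j : Fin n}
    (hj : k ≤ (j : ℕ)) : colPay (eRPS k p q) p j = ∑ i, p i := by
  refine Finset.sum_congr rfl fun i _ => ?_
  by_cases hi : (i : ℕ) < k
  · simp [eRPS, hi, hj.not_gt]
  · simp [hzero i (not_lt.1 hi)]

end eRPS

theorem pay_eq_sum_colPay_mul {m n : ℕ} (R : Matrix (Fin m) (Fin n) ℝ) (p : Fin m → ℝ)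
    (q : Fin n → ℝ) : pay R p q = ∑ j, colPay R p j * q j := by
  rw [pay, Finset.sum_comm]
  simp only [colPay, Finset.sum_mul]

theorem eq_zero_of_pos_iff_lt {m k : ℕ} {p : Fin m → ℝ} (hp : ∀ i, 0 ≤ p i)
    (hsupp : ∀ i : Fin m, 0 < p i ↔ (i : ℕ) < k) {i : Fin m} (hi : k ≤ (i : ℕ)) : p i = 0 :=
  le_antisymm (not_lt.1 fun h => ((hsupp i).1 h).not_ge hi) (hp i)

/-- Column payoffs of the eRPS game: in-support pure columns yield `0` against `p`,
out-of-support pure columns yield `1`; consequently `pᵀ R^{eRPS} q = 0`. -/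
theorem stmt7 {m n : ℕ} (k : ℕ) (hk : 2 ≤ k)
    (p : Fin m → ℝ) (q : Fin n → ℝ)
    (hp : isSimplex p) (hq : isSimplex q)
    (hsuppP : ∀ i : Fin m, 0 < p i ↔ (i : ℕ) < k)
    (hsuppQ : ∀ j : Fin n, 0 < q j ↔ (j : ℕ) < k) :
    (∀ j : Fin n, (j : ℕ) < k → colPay (eRPS k p q) p j = 0) ∧
      (∀ j : Fin n, k ≤ (j : ℕ) → colPay (eRPS k p q) p j = 1) ∧
      pay (eRPS k p q) p q = 0 := by
  have hzeroP : ∀ i : Fin m, k ≤ (i : ℕ) → p i = 0 := fun _ => eq_zero_of_pos_iff_lt hp.1 hsuppP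
  have hcol_lt : ∀ j : Fin n, (j : ℕ) < k → colPay (eRPS k p q) p j = 0 := fun j =>
    colPay_eRPS_of_lt hk hp.1 hq.1 (fun i hi => ((hsuppP i).2 hi).ne') hzeroP
  refine ⟨hcol_lt, fun j hj => (colPay_eRPS_of_le hzeroP hj).trans hp.2, ?_⟩
  rw [pay_eq_sum_colPay_mul]
  refine Finset.sum_eq_zero fun j _ => ?_
  rcases lt_or_ge (j : ℕ) k with hj | hj
  · rw [hcol_lt j hj, zero_mul]
  · rw [eq_zero_of_pos_iff_lt hq.1 hsuppQ hj, mul_zero]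
end
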